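/- arXiv:1209.5104 — 2 statements merged into one kernel-verified Lean document; each statement's English description precedes it below -/
import Mathlib

section
/- Let K be a field, I ⊆ K[x_1,…,x_n] an ideal, and ω ∈ (ℝ_{≥0})^n. Then In_ω I contains no monomial if and only if for every ν ∈ C_ω(I) the ideal In_ν I contains no monomial. Equivalently, ω belongs to the tropical variety TV(I) if and only if the whole Gröbner cone C_ω(I) is contained in TV(I). -/
open MvPolynomial Matrix

open Classical in
/-- The `w`-initial part of a multivariate polynomial: the sum of the terms whose
exponents have minimal `w`-weight among the exponents of `f`. -/
noncomputable def initialPart {n : ℕ} {K : Type*} [CommSemiring K] (w : Fin n → ℝ)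
    (f : MvPolynomial (Fin n) K) : MvPolynomial (Fin n) K :=
  ∑ μ ∈ f.support,
    if ∀ ν ∈ f.support, ∑ i, w i * (μ i : ℝ) ≤ ∑ i, w i * (ν i : ℝ)
    then monomial μ (f.coeff μ) else 0

/-- The `w`-initial ideal of an ideal `I`: the ideal generated by the `w`-initial
parts of the nonzero elements of `I`. -/
noncomputable def initialIdeal {n : ℕ} {K : Type*} [CommSemiring K] (w : Fin n → ℝ)
    (I : Ideal (MvPolynomial (Fin n) K)) : Ideal (MvPolynomial (Fin n) K) :=
  Ideal.span {g | ∃ f ∈ I, f ≠ 0 ∧ g = initialPart w f}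

/-- The Gröbner cone of `I` at `w`: the closure in `ℝ^n` of the set of nonnegative
vectors `u` with `In_u I = In_w I`. -/
noncomputable def groebnerCone {n : ℕ} {K : Type*} [CommSemiring K] (w : Fin n → ℝ)
    (I : Ideal (MvPolynomial (Fin n) K)) : Set (Fin n → ℝ) :=
  closure {u : Fin n → ℝ | (∀ i, 0 ≤ u i) ∧ initialIdeal u I = initialIdeal w I}

/-!
If `x^a ∈ In_v I`, then `x^a` is its own `v`-homogeneous component of degree `v·a`, and the
homogeneous components of elements of `In_v I` are again initial parts of elements of `I`; so
`x^a = In_v f` for some `f ∈ I`, i.e. every other exponent of `f` has strictly larger `v`-weight.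
These finitely many strict inequalities persist on a neighbourhood of `v`, which meets the set of
nonnegative `u` with `In_u I = In_w I` when `v ∈ C_w(I)`; for such `u`, `x^a = In_u f ∈ In_w I`.
-/

open Finsupp (weight)

section WeightedHomogeneous

variable {σ R M : Type*} [CommSemiring R]

theorem weightedHomogeneousComponent_monomial_mul [AddCommMonoid M] [IsLeftCancelAdd M]
    (w : σ → M) (r : M) (d : σ →₀ ℕ) (c : R) (f : MvPolynomial σ R) :
    weightedHomogeneousComponent w (weight w d + r) (monomial d c * f) =
      monomial d c * weightedHomogeneousComponent w r f := by
  classical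
  ext e
  rw [coeff_weightedHomogeneousComponent, coeff_monomial_mul', coeff_monomial_mul',
    coeff_weightedHomogeneousComponent]
  by_cases hde : d ≤ e
  · obtain ⟨e, rfl⟩ := exists_add_of_le hde
    simp [map_add]
  · simp [hde]

variable [AddCommMonoid M] [PartialOrder M]

/-- Apart from `0`, exactly the initial parts of `w`-order `r` of elements of `I`. -/
def initialForms (w : σ → M) (I : Ideal (MvPolynomial σ R)) (r : M) : Set (MvPolynomial σ R) :=
  {x | ∃ f ∈ I, (∀ d ∈ f.support, r ≤ weight w d) ∧ weightedHomogeneousComponent w r f = x}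

variable {w : σ → M} {I : Ideal (MvPolynomial σ R)} {r : M} {x y : MvPolynomial σ R}

theorem zero_mem_initialForms : (0 : MvPolynomial σ R) ∈ initialForms w I r :=
  ⟨0, I.zero_mem, by simp, map_zero _⟩

theorem add_mem_initialForms (hx : x ∈ initialForms w I r) (hy : y ∈ initialForms w I r) :
    x + y ∈ initialForms w I r := by
  classical
  obtain ⟨f, hfI, hf, rfl⟩ := hx
  obtain ⟨g, hgI, hg, rfl⟩ := hy
  refine ⟨f + g, I.add_mem hfI hgI, fun d hd => ?_, map_add _ f g⟩
  rcases Finset.mem_union.mp (support_add hd) with hd | hd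
  exacts [hf d hd, hg d hd]

theorem monomial_mul_mem_initialForms [IsOrderedCancelAddMonoid M] (d : σ →₀ ℕ) (c : R)
    (hx : x ∈ initialForms w I r) :
    monomial d c * x ∈ initialForms w I (weight w d + r) := by
  obtain ⟨f, hfI, hf, rfl⟩ := hx
  refine ⟨monomial d c * f, I.mul_mem_left _ hfI, fun e he => ?_,
    weightedHomogeneousComponent_monomial_mul w r d c f⟩
  rw [mem_support_iff, coeff_monomial_mul'] at he
  split_ifs at he with hde
  · obtain ⟨e, rfl⟩ := exists_add_of_le hde
    rw [add_tsub_cancel_left] at he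
    rw [map_add]
    exact add_le_add_right (hf e (mem_support_iff.mpr (right_ne_zero_of_mul he))) _
  · exact absurd rfl he

end WeightedHomogeneous

theorem continuous_weight {σ : Type*} [Fintype σ] (d : σ →₀ ℕ) :
    Continuous fun u : σ → ℝ => weight u d := by
  simp only [Finsupp.weight_eq_sum]
  fun_prop

theorem isOpen_setOf_forall_weight_lt {σ : Type*} [Fintype σ] (a : σ →₀ ℕ)
    (s : Finset (σ →₀ ℕ)) : IsOpen {u : σ → ℝ | ∀ d ∈ s, weight u a < weight u d} := by
  simp only [Set.ofPred_forall]
  exact isOpen_biInter_finset fun d _ => isOpen_lt (continuous_weight a) (continuous_weight d)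

section InitialPart

variable {n : ℕ} {R : Type*} [CommSemiring R] {w : Fin n → ℝ} {f : MvPolynomial (Fin n) R}

theorem weight_eq_sum_mul (w : Fin n → ℝ) (d : Fin n →₀ ℕ) :
    weight w d = ∑ i, w i * (d i : ℝ) := by
  simp [Finsupp.weight_eq_sum, mul_comm]

theorem coeff_initialPart (w : Fin n → ℝ) (f : MvPolynomial (Fin n) R) (d : Fin n →₀ ℕ) :
    coeff d (initialPart w f) =
      if ∀ e ∈ f.support, weight w d ≤ weight w e then coeff d f else 0 := by
  classical
  simp only [initialPart, ← weight_eq_sum_mul, coeff_sum, apply_ite (coeff d), coeff_monomial,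
    coeff_zero]
  rw [Finset.sum_eq_single d (fun e _ hne => by simp [hne])
    (fun hd => by simp [notMem_support_iff.mp hd])]
  simp

theorem initialPart_eq_weightedHomogeneousComponent {r : ℝ}
    (hf : ∀ d ∈ f.support, r ≤ weight w d) (hr : ∃ d ∈ f.support, weight w d = r) :
    initialPart w f = weightedHomogeneousComponent w r f := by
  classical
  obtain ⟨d₀, hd₀, rfl⟩ := hr
  ext d
  rw [coeff_initialPart, coeff_weightedHomogeneousComponent]
  by_cases hd : d ∈ f.support
  · exact if_congr ⟨fun h => le_antisymm (h d₀ hd₀) (hf d hd), fun h e he => h ▸ hf e he⟩ rfl rfl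
  · simp [notMem_support_iff.mp hd]

theorem initialPart_eq_monomial {a : Fin n →₀ ℕ} (ha : a ∈ f.support)
    (hlt : ∀ d ∈ f.support.erase a, weight w a < weight w d) :
    initialPart w f = monomial a (coeff a f) := by
  classical
  ext d
  rw [coeff_initialPart, coeff_monomial]
  split_ifs with hmin had had
  · rw [had]
  · by_contra hd
    exact (hmin a ha).not_gt (hlt d (Finset.mem_erase.mpr ⟨Ne.symm had, mem_support_iff.mpr hd⟩))
  · subst had
    refine absurd (fun e he => ?_) hmin
    obtain rfl | hea := eq_or_ne e a
    · exact le_rfl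
    · exact (hlt e (Finset.mem_erase.mpr ⟨hea, he⟩)).le
  · rfl

theorem weightedHomogeneousComponent_mem_initialForms {I : Ideal (MvPolynomial (Fin n) R)}
    {p : MvPolynomial (Fin n) R} (hp : p ∈ initialIdeal w I) :
    ∀ r, weightedHomogeneousComponent w r p ∈ initialForms w I r := by
  induction hp using Submodule.span_induction with
  | mem x hx =>
    obtain ⟨f, hfI, hf0, rfl⟩ := hx
    obtain ⟨d₀, hd₀, hmin⟩ := f.support.exists_min_image (weight w) (support_nonempty.mpr hf0)
    have hhom := weightedHomogeneousComponent_isWeightedHomogeneous (w := w) (weight w d₀) f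
    rw [initialPart_eq_weightedHomogeneousComponent hmin ⟨d₀, hd₀, rfl⟩]
    intro r
    by_cases hr : r = weight w d₀
    · rw [hr, weightedHomogeneousComponent_eq_self hhom]
      exact ⟨f, hfI, hmin, rfl⟩
    · rw [hhom.weightedHomogeneousComponent_ne r hr]
      exact zero_mem_initialForms
  | zero => simpa using fun _ => zero_mem_initialForms
  | add x y _ _ hx hy =>
    intro r
    rw [map_add]
    exact add_mem_initialForms (hx r) (hy r)
  | smul a x _ hx =>
    rw [smul_eq_mul]
    induction a using MvPolynomial.induction_on' with
    | monomial d c =>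
      intro r
      have := monomial_mul_mem_initialForms d c (hx (r - weight w d))
      rwa [← weightedHomogeneousComponent_monomial_mul, add_sub_cancel] at this
    | add a b ha hb =>
      intro r
      rw [add_mul, map_add]
      exact add_mem_initialForms (ha r) (hb r)

theorem exists_coeff_eq_one_of_monomial_mem_initialIdeal {I : Ideal (MvPolynomial (Fin n) R)}
    {a : Fin n →₀ ℕ} (ha : monomial a (1 : R) ∈ initialIdeal w I) :
    ∃ f ∈ I, coeff a f = 1 ∧ ∀ d ∈ f.support.erase a, weight w a < weight w d := by
  classical
  have hcomp := weightedHomogeneousComponent_mem_initialForms ha (weight w a)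
  rw [weightedHomogeneousComponent_eq_self (isWeightedHomogeneous_monomial w a 1 rfl)] at hcomp
  obtain ⟨f, hfI, hge, hf⟩ := hcomp
  have hcoeff (d : Fin n →₀ ℕ) := congrArg (coeff d) hf
  simp only [coeff_weightedHomogeneousComponent, coeff_monomial] at hcoeff
  refine ⟨f, hfI, by simpa using hcoeff a, fun d hd => ?_⟩
  obtain ⟨hda, hd⟩ := Finset.mem_erase.mp hd
  refine (hge d hd).lt_of_ne fun hw => mem_support_iff.mp hd ?_
  simpa [← hw, Ne.symm hda] using hcoeff d

end InitialPart

/-- For `ω` in the first orthant, the initial ideal `In_ω I` contains no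
monomial if and only if for every `ν` in the Gröbner cone `C_ω(I)` the initial ideal
`In_ν I` contains no monomial; i.e. `ω ∈ TV(I)` iff `C_ω(I) ⊆ TV(I)`. -/
theorem monomialFree_initialIdeal_iff_forall_groebnerCone {n : ℕ} {K : Type*} [Field K]
    (I : Ideal (MvPolynomial (Fin n) K)) (w : Fin n → ℝ) (hw : ∀ i, 0 ≤ w i) :
    (∀ a : Fin n →₀ ℕ, (monomial a (1 : K)) ∉ initialIdeal w I) ↔
      ∀ v ∈ groebnerCone w I, ∀ a : Fin n →₀ ℕ, (monomial a (1 : K)) ∉ initialIdeal v I := by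
  refine ⟨fun h v hv a hmem => ?_, fun h => h w (subset_closure ⟨hw, rfl⟩)⟩
  obtain ⟨f, hfI, hfa, hlt⟩ := exists_coeff_eq_one_of_monomial_mem_initialIdeal hmem
  obtain ⟨u, hu, -, hIu⟩ :=
    mem_closure_iff.mp hv _ (isOpen_setOf_forall_weight_lt a (f.support.erase a)) hlt
  have ha : a ∈ f.support := by simp [hfa]
  apply h a
  rw [← hIu, ← hfa, ← initialPart_eq_monomial ha hu]
  exact Ideal.subset_span ⟨f, hfI, ne_zero_iff.mpr ⟨a, by simp [hfa]⟩, rfl⟩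
end

section
/- Let K be a field and M an n×n unimodular matrix with nonnegative integer entries and columns m^{(1)},…,m^{(n)}. Let g_1,…,g_r ∈ K[x_1,…,x_n] be nonzero polynomials such that, for each i, In_u g_i is the same polynomial for all u = Mλ with λ ∈ (ℝ_{>0})^n, and write g_i∘φ_{M^t} = x^{P_i}·h_i with P_i ∈ ℕ^n and h_i(0) ≠ 0. Fix s ∈ {1,…,n} and a vector w = λ_1 m^{(1)} + ⋯ + λ_s m^{(s)} with all λ_i > 0. If there exists y ∈ (K^*)^n with (In_w g_i)(y) = 0 for all i, then there exist z_{s+1},…,z_n ∈ K∖{0} such that h_i(0,…,0,z_{s+1},…,z_n) = 0 for every i ∈ {1,…,r}; in particular the common zero set of h_1,…,h_r meets the set {x_1 = ⋯ = x_s = 0, x_{s+1}⋯x_n ≠ 0}. -/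
/-!
As `M` is unimodular, `φ_{Mᵀ}` is a bijection of the torus, and on exponents it is the injective
map `μ ↦ Mᵀ μ`, which turns the `Mλ`-weight into the `λ`-weight. Hence it carries `In_{Mλ} g_i`
to `In_λ (x^{P_i} h_i) = x^{P_i} In_λ h_i`, and pulling the torus zero `y` back to `p` gives
`(In_λ h_i)(p) = 0`. Since `λ ≥ 0` and `h_i(0) ≠ 0`, the minimal `λ`-weight of `h_i` is `0`, so
`In_λ h_i` consists of the monomials of `h_i` free of the variables with `λ_j > 0`; therefore
`(In_λ h_i)(p) = h_i(z)`, where `z` is `p` with those coordinates set to `0`.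
-/

open MvPolynomial Matrix

/-- The monomial substitution `φ_M` on polynomials: `x_i ↦ ∏_j x_j ^ (M j i)`,
so that `x^μ ↦ x^(Mμ)`. -/
noncomputable def monomialSubst {n : ℕ} {K : Type*} [CommSemiring K]
    (M : Matrix (Fin n) (Fin n) ℕ) (f : MvPolynomial (Fin n) K) : MvPolynomial (Fin n) K :=
  aeval (fun i => ∏ j, (X j : MvPolynomial (Fin n) K) ^ M j i) f

/-- A nonnegative integer square matrix is unimodular if its determinant (over `ℤ`) is `±1`. -/
def IsUnimodular {n : ℕ} (M : Matrix (Fin n) (Fin n) ℕ) : Prop :=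
  (M.map fun a => (a : ℤ)).det = 1 ∨ (M.map fun a => (a : ℤ)).det = -1

theorem IsUnimodular.isUnit_det {n : ℕ} {M : Matrix (Fin n) (Fin n) ℕ} (hM : IsUnimodular M) :
    IsUnit (M.map ((↑) : ℕ → ℤ)).det := by
  rcases hM with h | h <;> simp [h]

theorem IsUnimodular.transpose {n : ℕ} {M : Matrix (Fin n) (Fin n) ℕ} (hM : IsUnimodular M) :
    IsUnimodular Mᵀ := by
  simpa only [IsUnimodular, transpose_map, det_transpose] using hM

section InitialPart

variable {n : ℕ} {K : Type*} [CommSemiring K]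

theorem initialPart_eq_sum_weight (w : Fin n → ℝ) (f : MvPolynomial (Fin n) K) :
    initialPart w f = ∑ μ ∈ f.support,
      if ∀ ν ∈ f.support, Finsupp.weight w μ ≤ Finsupp.weight w ν
      then monomial μ (f.coeff μ) else 0 := by
  simp only [initialPart, Finsupp.weight_eq_sum, nsmul_eq_mul, mul_comm]

theorem coeff_sum_monomial_comp {T : (Fin n →₀ ℕ) → (Fin n →₀ ℕ)} (hT : T.Injective)
    (f : MvPolynomial (Fin n) K) (μ : Fin n →₀ ℕ) :
    coeff (T μ) (∑ ν ∈ f.support, monomial (T ν) (f.coeff ν)) = f.coeff μ := by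
  classical
  simp only [coeff_sum, coeff_monomial, hT.eq_iff, Finset.sum_ite_eq', mem_support_iff]
  exact ite_eq_left_iff.mpr fun h => (not_not.mp h).symm

theorem support_sum_monomial_comp {T : (Fin n →₀ ℕ) → (Fin n →₀ ℕ)} (hT : T.Injective)
    (f : MvPolynomial (Fin n) K) :
    (∑ ν ∈ f.support, monomial (T ν) (f.coeff ν)).support = f.support.image T := by
  ext ν
  constructor
  · intro hν
    by_contra hT'
    refine mem_support_iff.mp hν ?_
    rw [coeff_sum]
    exact Finset.sum_eq_zero fun μ hμ => by
      rw [coeff_monomial, if_neg fun h => hT' (Finset.mem_image.mpr ⟨μ, hμ, h⟩)]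
  · rw [Finset.mem_image]
    rintro ⟨μ, hμ, rfl⟩
    rw [mem_support_iff, coeff_sum_monomial_comp hT]
    exact mem_support_iff.mp hμ

theorem initialPart_sum_monomial_comp {w w' : Fin n → ℝ} {T : (Fin n →₀ ℕ) → (Fin n →₀ ℕ)}
    (hT : T.Injective)
    (hw : ∀ μ ν, Finsupp.weight w' (T μ) ≤ Finsupp.weight w' (T ν) ↔
      Finsupp.weight w μ ≤ Finsupp.weight w ν)
    (f : MvPolynomial (Fin n) K) :
    initialPart w' (∑ μ ∈ f.support, monomial (T μ) (f.coeff μ)) =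
      ∑ μ ∈ f.support, if ∀ ν ∈ f.support, Finsupp.weight w μ ≤ Finsupp.weight w ν
        then monomial (T μ) (f.coeff μ) else 0 := by
  rw [initialPart_eq_sum_weight, support_sum_monomial_comp hT, Finset.sum_image hT.injOn]
  refine Finset.sum_congr rfl fun μ _ => ?_
  simp only [Finset.forall_mem_image, hw, coeff_sum_monomial_comp hT]

theorem monomial_one_mul_eq_sum (P : Fin n →₀ ℕ) (f : MvPolynomial (Fin n) K) :
    monomial P 1 * f = ∑ μ ∈ f.support, monomial (P + μ) (f.coeff μ) := by
  conv_lhs => rw [f.as_sum]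
  simp only [Finset.mul_sum, monomial_mul, one_mul]

theorem initialPart_monomial_one_mul (w : Fin n → ℝ) (P : Fin n →₀ ℕ)
    (f : MvPolynomial (Fin n) K) :
    initialPart w (monomial P 1 * f) = monomial P 1 * initialPart w f := by
  rw [monomial_one_mul_eq_sum, initialPart_sum_monomial_comp (w := w) (add_right_injective P)
    (fun μ ν => by simp only [map_add, add_le_add_iff_left]), initialPart_eq_sum_weight,
    Finset.mul_sum]
  simp only [mul_ite, mul_zero, monomial_mul, one_mul]

end InitialPart

section MonomialSubst

variable {n : ℕ} {K : Type*} [CommSemiring K]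

noncomputable def finsuppMulVec (A : Matrix (Fin n) (Fin n) ℕ) (μ : Fin n →₀ ℕ) : Fin n →₀ ℕ :=
  Finsupp.equivFunOnFinite.symm (A *ᵥ ⇑μ)

theorem finsuppMulVec_apply (A : Matrix (Fin n) (Fin n) ℕ) (μ : Fin n →₀ ℕ) (i : Fin n) :
    finsuppMulVec A μ i = ∑ j, A i j * μ j := rfl

theorem finsuppMulVec_injective {A : Matrix (Fin n) (Fin n) ℕ} (hA : IsUnimodular A) :
    (finsuppMulVec A).Injective := by
  intro μ ν hμν
  have hZ : A.map ((↑) : ℕ → ℤ) *ᵥ (fun j => (μ j : ℤ)) =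
      A.map ((↑) : ℕ → ℤ) *ᵥ (fun j => (ν j : ℤ)) := by
    ext i
    have := congrArg (fun κ => (κ i : ℤ)) hμν
    simpa [finsuppMulVec_apply, mulVec, dotProduct] using this
  ext j
  exact_mod_cast congrFun (mulVec_injective_of_isUnit
    ((isUnit_iff_isUnit_det _).mpr hA.isUnit_det) hZ) j

theorem weight_finsuppMulVec (A : Matrix (Fin n) (Fin n) ℕ) (w : Fin n → ℝ) (μ : Fin n →₀ ℕ) :
    Finsupp.weight w (finsuppMulVec A μ) = Finsupp.weight (Aᵀ.map ((↑) : ℕ → ℝ) *ᵥ w) μ := by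
  simp only [Finsupp.weight_eq_sum, finsuppMulVec_apply, mulVec, dotProduct, transpose_apply,
    map_apply, nsmul_eq_mul, Nat.cast_sum, Nat.cast_mul, Finset.sum_mul, Finset.mul_sum]
  rw [Finset.sum_comm]
  exact Finset.sum_congr rfl fun _ _ => Finset.sum_congr rfl fun _ _ => by ring

theorem monomialSubst_monomial (A : Matrix (Fin n) (Fin n) ℕ) (μ : Fin n →₀ ℕ) (c : K) :
    monomialSubst A (monomial μ c) = monomial (finsuppMulVec A μ) c := by
  rw [monomialSubst, aeval_monomial, monomial_eq, Finsupp.prod_fintype _ _ fun _ => pow_zero _,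
    Finsupp.prod_fintype _ _ fun _ => pow_zero _]
  simp only [← Finset.prod_pow, ← pow_mul, algebraMap_eq]
  rw [Finset.prod_comm]
  simp only [Finset.prod_pow_eq_pow_sum, finsuppMulVec_apply]

theorem monomialSubst_eq_sum (A : Matrix (Fin n) (Fin n) ℕ) (f : MvPolynomial (Fin n) K) :
    monomialSubst A f = ∑ μ ∈ f.support, monomial (finsuppMulVec A μ) (f.coeff μ) := by
  conv_lhs => rw [f.as_sum]
  rw [monomialSubst, map_sum]
  exact Finset.sum_congr rfl fun μ _ => monomialSubst_monomial A μ _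

theorem monomialSubst_transpose_initialPart {M : Matrix (Fin n) (Fin n) ℕ} (hM : IsUnimodular M)
    (w : Fin n → ℝ) (f : MvPolynomial (Fin n) K) :
    monomialSubst Mᵀ (initialPart (M.map ((↑) : ℕ → ℝ) *ᵥ w) f) =
      initialPart w (monomialSubst Mᵀ f) := by
  rw [monomialSubst_eq_sum Mᵀ f, initialPart_sum_monomial_comp (w := M.map (↑) *ᵥ w)
    (finsuppMulVec_injective hM.transpose)
    (fun μ ν => by simp only [weight_finsuppMulVec, transpose_transpose]),
    initialPart_eq_sum_weight, monomialSubst, map_sum]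
  refine Finset.sum_congr rfl fun μ _ => ?_
  rw [apply_ite (aeval _), map_zero]
  exact congrArg (ite _ · 0) (monomialSubst_monomial Mᵀ μ _)

theorem eval_monomialSubst (A : Matrix (Fin n) (Fin n) ℕ) (p : Fin n → K)
    (f : MvPolynomial (Fin n) K) :
    eval p (monomialSubst A f) = eval (fun i => ∏ j, p j ^ A j i) f := by
  change aeval p (aeval _ f) = _
  rw [comp_aeval_apply]
  simp [map_prod]

end MonomialSubst

section Nonneg

variable {n : ℕ} {K : Type*} [CommSemiring K] {w : Fin n → ℝ}

theorem weight_eq_zero_iff_of_nonneg (hw : ∀ j, 0 ≤ w j) (μ : Fin n →₀ ℕ) :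
    Finsupp.weight w μ = 0 ↔ ∀ j, μ j ≠ 0 → w j = 0 := by
  rw [Finsupp.weight_eq_sum, Finset.sum_eq_zero_iff_of_nonneg fun j _ => nsmul_nonneg (hw j) _]
  simp only [Finset.mem_univ, true_implies, smul_eq_zero, or_iff_not_imp_left]

theorem eval_monomial_zero_where_ne_zero (p : Fin n → K) (μ : Fin n →₀ ℕ) (c : K) :
    eval (fun j => if w j = 0 then p j else 0) (monomial μ c) =
      if ∀ j, μ j ≠ 0 → w j = 0 then eval p (monomial μ c) else 0 := by
  simp only [eval_monomial, Finsupp.prod]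
  split_ifs with hμ
  · exact congrArg (c * ·) <| Finset.prod_congr rfl fun j hj => by
      rw [if_pos (hμ j (Finsupp.mem_support_iff.mp hj))]
  · push Not at hμ
    obtain ⟨j, hj, hwj⟩ := hμ
    rw [Finset.prod_eq_zero (Finsupp.mem_support_iff.mpr hj) (by simp [hwj, hj]), mul_zero]

theorem eval_initialPart_of_nonneg (hw : ∀ j, 0 ≤ w j) {f : MvPolynomial (Fin n) K}
    (hf : eval 0 f ≠ 0) (p : Fin n → K) :
    eval p (initialPart w f) = eval (fun j => if w j = 0 then p j else 0) f := by
  have h0 : 0 ∈ f.support := by rwa [mem_support_iff, ← constantCoeff_eq, ← eval_zero]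
  have hweight : ∀ μ, 0 ≤ Finsupp.weight w μ := fun μ => by
    simpa only [Finsupp.weight_eq_sum] using Finset.sum_nonneg fun j _ => nsmul_nonneg (hw j) _
  have hmin : ∀ μ, (∀ ν ∈ f.support, Finsupp.weight w μ ≤ Finsupp.weight w ν) ↔
      ∀ j, μ j ≠ 0 → w j = 0 := fun μ => by
    rw [← weight_eq_zero_iff_of_nonneg hw]
    refine ⟨fun h => le_antisymm (by simpa using h 0 h0) (hweight μ), fun h ν _ => ?_⟩
    rw [h]
    exact hweight ν
  conv_rhs => rw [f.as_sum]
  rw [initialPart_eq_sum_weight, map_sum, map_sum]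
  refine Finset.sum_congr rfl fun μ _ => ?_
  rw [apply_ite (eval p), map_zero, eval_monomial_zero_where_ne_zero]
  exact if_congr (hmin μ) rfl rfl

end Nonneg

theorem Finset.prod_zpow_eq_zpow_sum {ι G : Type*} [CommGroup G] (s : Finset ι) (f : ι → ℤ)
    (a : G) : ∏ i ∈ s, a ^ f i = a ^ ∑ i ∈ s, f i := by
  induction s using Finset.cons_induction with
  | empty => simp
  | cons i s hi ih => rw [Finset.prod_cons, Finset.sum_cons, ih, _root_.zpow_add]

theorem prod_zpow_prod_zpow {n : ℕ} {G : Type*} [CommGroup G] (A B : Matrix (Fin n) (Fin n) ℤ)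
    (u : Fin n → G) (i : Fin n) :
    ∏ j, (∏ k, u k ^ B j k) ^ A i j = ∏ k, u k ^ (A * B) i k := by
  simp only [← Finset.prod_zpow, ← _root_.zpow_mul]
  rw [Finset.prod_comm]
  simp only [Finset.prod_zpow_eq_zpow_sum, mul_apply, mul_comm (B _ _)]

theorem IsUnimodular.exists_prod_pow_eq {n : ℕ} {K : Type*} [CommGroupWithZero K]
    {M : Matrix (Fin n) (Fin n) ℕ} (hM : IsUnimodular M) {y : Fin n → K} (hy : ∀ i, y i ≠ 0) :
    ∃ p : Fin n → K, (∀ j, p j ≠ 0) ∧ (fun i => ∏ j, p j ^ M i j) = y := by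
  set Mz := M.map ((↑) : ℕ → ℤ)
  let u : Fin n → Kˣ := fun i => Units.mk0 (y i) (hy i)
  let v : Fin n → Kˣ := fun j => ∏ k, u k ^ Mz⁻¹ j k
  refine ⟨fun j => v j, fun j => (v j).ne_zero, funext fun i => ?_⟩
  have hv : ∏ j, v j ^ Mz i j = u i := by
    rw [prod_zpow_prod_zpow, mul_nonsing_inv _ hM.isUnit_det]
    simp [one_apply]
  simpa [Mz, u] using congrArg Units.val hv

theorem torus_zero_of_initials_gives_orbit_point_general {n r : ℕ} {K : Type*} [Field K]
    (M : Matrix (Fin n) (Fin n) ℕ) (hM : IsUnimodular M)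
    (g : Fin r → MvPolynomial (Fin n) K)
    (P : Fin r → (Fin n →₀ ℕ)) (h : Fin r → MvPolynomial (Fin n) K)
    (hfac : ∀ i, monomialSubst Mᵀ (g i) = monomial (P i) 1 * h i)
    (hh0 : ∀ i, eval (0 : Fin n → K) (h i) ≠ 0)
    (s : ℕ)
    (lam : Fin n → ℝ) (hlam : ∀ i : Fin n, ((i : ℕ) < s → 0 < lam i) ∧ (s ≤ (i : ℕ) → lam i = 0))
    (y : Fin n → K) (hy : ∀ j, y j ≠ 0)
    (hyz : ∀ i, eval y (initialPart ((M.map ((↑) : ℕ → ℝ)).mulVec lam) (g i)) = 0) :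
    ∃ z : Fin n → K, (∀ j : Fin n, (j : ℕ) < s → z j = 0) ∧
      (∀ j : Fin n, s ≤ (j : ℕ) → z j ≠ 0) ∧ ∀ i, eval z (h i) = 0 := by
  obtain ⟨p, hp0, rfl⟩ := hM.exists_prod_pow_eq hy
  have hlam0 : ∀ j, 0 ≤ lam j := fun j => by
    rcases lt_or_ge (j : ℕ) s with hj | hj
    exacts [((hlam j).1 hj).le, ((hlam j).2 hj).ge]
  refine ⟨fun j => if lam j = 0 then p j else 0, fun j hj => if_neg ((hlam j).1 hj).ne',
    fun j hj => by simpa [(hlam j).2 hj] using hp0 j, fun i => ?_⟩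
  have hzero : eval p (monomialSubst Mᵀ (initialPart (M.map (↑) *ᵥ lam) (g i))) = 0 := by
    rw [eval_monomialSubst]
    exact hyz i
  rw [monomialSubst_transpose_initialPart hM, hfac, initialPart_monomial_one_mul, map_mul]
    at hzero
  rw [← eval_initialPart_of_nonneg hlam0 (hh0 i)]
  refine (mul_eq_zero.mp hzero).resolve_left ?_
  rw [eval_monomial, one_mul]
  exact Finset.prod_ne_zero_iff.mpr fun j _ => pow_ne_zero _ (hp0 j)

/-- Let `M` be a nonnegative unimodular matrix whose column cone is good for
each of the nonzero polynomials `g_1, …, g_r`, and write `g_i ∘ φ_{Mᵀ} = x^{P_i} · h_i`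
with `h_i(0) ≠ 0`.  Let `w = λ_1 m^{(1)} + ⋯ + λ_s m^{(s)}` be a positive combination of
the first `s` columns of `M`.  If the initial parts `In_w g_i` have a common zero in the
torus `(K^*)^n`, then the common zero set of `h_1, …, h_r` meets the set
`{x_1 = ⋯ = x_s = 0, x_{s+1} ⋯ x_n ≠ 0}`. -/
theorem torus_zero_of_initials_gives_orbit_point {n r : ℕ} {K : Type*} [Field K]
    (M : Matrix (Fin n) (Fin n) ℕ) (hM : IsUnimodular M)
    (g : Fin r → MvPolynomial (Fin n) K) (hg : ∀ i, g i ≠ 0)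
    (hgood : ∀ i, ∀ lam lam' : Fin n → ℝ, (∀ j, 0 < lam j) → (∀ j, 0 < lam' j) →
      initialPart ((M.map ((↑) : ℕ → ℝ)).mulVec lam) (g i) =
        initialPart ((M.map ((↑) : ℕ → ℝ)).mulVec lam') (g i))
    (P : Fin r → (Fin n →₀ ℕ)) (h : Fin r → MvPolynomial (Fin n) K)
    (hfac : ∀ i, monomialSubst Mᵀ (g i) = monomial (P i) 1 * h i)
    (hh0 : ∀ i, eval (0 : Fin n → K) (h i) ≠ 0)
    (s : ℕ) (hs1 : 1 ≤ s) (hsn : s ≤ n)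
    (lam : Fin n → ℝ) (hlam : ∀ i : Fin n, ((i : ℕ) < s → 0 < lam i) ∧ (s ≤ (i : ℕ) → lam i = 0))
    (y : Fin n → K) (hy : ∀ j, y j ≠ 0)
    (hyz : ∀ i, eval y (initialPart ((M.map ((↑) : ℕ → ℝ)).mulVec lam) (g i)) = 0) :
    ∃ z : Fin n → K, (∀ j : Fin n, (j : ℕ) < s → z j = 0) ∧
      (∀ j : Fin n, s ≤ (j : ℕ) → z j ≠ 0) ∧ ∀ i, eval z (h i) = 0 :=
  torus_zero_of_initials_gives_orbit_point_general M hM g P h hfac hh0 s lam hlam y hy hyz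
end
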